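/- Let m ≥ 1 be an integer. There exists a constant K > 0 such that for every integer N ≥ m there exist complex coefficients C_{N,m,ℓ,j}, indexed by 0 ≤ ℓ ≤ m−1 and 0 ≤ j ≤ m−ℓ, independent of α, with |C_{N,m,ℓ,j}| ≤ K/N, such that for every α ∈ 𝒜 = {α ∈ ℂ⁴ : |Re α| = |Im α| = 1, Re α · Im α = 0} and every p ∈ ℝ³ the following identity holds for F_N(p) = (2/(|p|²+1))² (α·ω(p))^N: ((N+1)^{−1} L̃₃)^m F_N(p) = (−i)^m [ (α₁p₂ − α₂p₁)^m + Q_{α,m}(p;N) ] · (2/(|p|²+1))^{m+2} · (α·ω(p))^{N−m}, where Q_{α,m}(p;N) = Σ_{ℓ=0}^{m−1} Σ_{j=0}^{m−ℓ} C_{N,m,ℓ,j} (α₁p₂ − α₂p₁)^j (α₁p₁ + α₂p₂)^{m−ℓ−j} ((|p|²+1)/2)^ℓ (α·ω(p))^ℓ. -/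

import Mathlib

/-- `|p|²` on `Fin 3 → ℝ`. -/
noncomputable def normSq3 (p : Fin 3 → ℝ) : ℝ := p 0 ^ 2 + p 1 ^ 2 + p 2 ^ 2

/-- The inverse stereographic projection `ω : ℝ³ → ℝ⁴`. -/
noncomputable def stereoInv (p : Fin 3 → ℝ) : Fin 4 → ℝ :=
  ![2 * p 0 / (normSq3 p + 1), 2 * p 1 / (normSq3 p + 1), 2 * p 2 / (normSq3 p + 1),
    (normSq3 p - 1) / (normSq3 p + 1)]

/-- `α·ω(p) = Σⱼ αⱼ ωⱼ(p)` (bilinear, no conjugation). -/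
noncomputable def adotom (α : Fin 4 → ℂ) (p : Fin 3 → ℝ) : ℂ :=
  ∑ j, α j * (stereoInv p j : ℂ)

/-- The angular momentum operator in momentum space:
`(L̃₃ g)(p) = −i(p₂ ∂g/∂p₁(p) − p₁ ∂g/∂p₂(p))`. -/
noncomputable def L3tilde (g : (Fin 3 → ℝ) → ℂ) (p : Fin 3 → ℝ) : ℂ :=
  -Complex.I * ((p 1 : ℂ) * fderiv ℝ g p (Pi.single 0 1)
    - (p 0 : ℂ) * fderiv ℝ g p (Pi.single 1 1))

/-- Membership in `𝒜 = {α ∈ ℂ⁴ : |Re α| = |Im α| = 1, Re α · Im α = 0}`. -/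
def memA (α : Fin 4 → ℂ) : Prop :=
  (∑ j, (α j).re ^ 2) = 1 ∧ (∑ j, (α j).im ^ 2) = 1 ∧ (∑ j, (α j).re * (α j).im) = 0

/-!
Write `ρ = 2/(|p|²+1)`, `W = α·ω`, `B = α₁p₂ − α₂p₁`, `A = α₁p₁ + α₂p₂` and `V = W/ρ`, a
polynomial in `p`. The rotation generator `D = iL̃₃ = p₂∂₁ − p₁∂₂` kills the radial `ρ`, and
`DW = ρB`, `DB = −A`, `DA = B`, `DV = B`. Hence `((N+1)⁻¹L̃₃)^t F_N = (−i)^t ρ^{t+2} W^{N−t} P_t`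
with `P₀ = 1` and `P_{t+1} = ((N−t) B P_t + V·DP_t)/(N+1)`, so `P_t` is a combination of words of
length `t` in `B, A, V` with coefficients independent of `α`.

Split `P_t = a_t B^t + R_t` and let `r_t` be the ℓ¹-norm of the coefficients of `R_t`. Since `D` of
a word of length `t` is a sum of `t` words, one step gives `a_{t+1} + r_{t+1} ≤ N(a_t + r_t)/(N+1)`
and raises `1 − a_t + r_t` by at most `(2t+1)/(N+1)`; so `1 − a_m + r_m ≤ m²/(N+1)`, which bounds
every `C_{N,m,ℓ,j}`. Every word of `R_t` has a letter other than `V`, so only the monomials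
`B^j A^{m−ℓ−j} V^ℓ` with `ℓ < m` occur.
-/

open Complex Finset

noncomputable def angDeriv (g : (Fin 3 → ℝ) → ℂ) (p : Fin 3 → ℝ) : ℂ :=
  (p 1 : ℂ) * fderiv ℝ g p (Pi.single 0 1) - (p 0 : ℂ) * fderiv ℝ g p (Pi.single 1 1)

theorem L3tilde_eq_angDeriv (g : (Fin 3 → ℝ) → ℂ) (p : Fin 3 → ℝ) :
    L3tilde g p = -I * angDeriv g p := rfl

section angDeriv

variable {f g : (Fin 3 → ℝ) → ℂ} {p : Fin 3 → ℝ}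

theorem angDeriv_add (hf : DifferentiableAt ℝ f p) (hg : DifferentiableAt ℝ g p) :
    angDeriv (fun q => f q + g q) p = angDeriv f p + angDeriv g p := by
  simp only [angDeriv, fderiv_fun_add hf hg, add_apply]
  ring

theorem angDeriv_sub (hf : DifferentiableAt ℝ f p) (hg : DifferentiableAt ℝ g p) :
    angDeriv (fun q => f q - g q) p = angDeriv f p - angDeriv g p := by
  simp only [angDeriv, fderiv_fun_sub hf hg, sub_apply]
  ring

theorem angDeriv_mul (hf : DifferentiableAt ℝ f p) (hg : DifferentiableAt ℝ g p) :
    angDeriv (fun q => f q * g q) p = angDeriv f p * g p + f p * angDeriv g p := by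
  simp only [angDeriv, fderiv_fun_mul hf hg, add_apply, smul_apply, smul_eq_mul]
  ring

theorem angDeriv_const_mul (c : ℂ) (hg : DifferentiableAt ℝ g p) :
    angDeriv (fun q => c * g q) p = c * angDeriv g p := by
  simp only [angDeriv, fderiv_const_mul hg, smul_apply, smul_eq_mul]
  ring

theorem angDeriv_pow (hf : DifferentiableAt ℝ f p) (n : ℕ) :
    angDeriv (fun q => f q ^ n) p = n * f p ^ (n - 1) * angDeriv f p := by
  simp only [angDeriv, fderiv_fun_pow n hf, smul_apply, smul_eq_mul, nsmul_eq_mul]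
  ring

theorem angDeriv_sum {ι : Type*} (s : Finset ι) {f : ι → (Fin 3 → ℝ) → ℂ}
    (hf : ∀ i ∈ s, DifferentiableAt ℝ (f i) p) :
    angDeriv (fun q => ∑ i ∈ s, f i q) p = ∑ i ∈ s, angDeriv (f i) p := by
  simp only [angDeriv, fderiv_fun_sum hf, _root_.sum_apply, mul_sum, sum_sub_distrib]

theorem angDeriv_prod {ι : Type*} [Fintype ι] [DecidableEq ι] {f : ι → (Fin 3 → ℝ) → ℂ}
    (hf : ∀ i, DifferentiableAt ℝ (f i) p) :
    angDeriv (fun q => ∏ i, f i q) p = ∑ i, (∏ j ∈ univ.erase i, f j p) * angDeriv (f i) p := by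
  simp only [angDeriv, fderiv_finsetProd fun i _ => hf i, _root_.sum_apply, smul_apply,
    smul_eq_mul, mul_sum, ← sum_sub_distrib]
  exact sum_congr rfl fun i _ => by ring

theorem hasFDerivAt_ofReal_apply (i : Fin 3) :
    HasFDerivAt (fun q : Fin 3 → ℝ => (q i : ℂ)) (ofRealCLM.comp (ContinuousLinearMap.proj i)) p :=
  ofRealCLM.hasFDerivAt.comp p (hasFDerivAt_apply i p)

theorem angDeriv_ofReal_apply (i : Fin 3) :
    angDeriv (fun q => (q i : ℂ)) p = ![(p 1 : ℂ), -p 0, 0] i := by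
  fin_cases i <;> simp [angDeriv, (hasFDerivAt_ofReal_apply _).fderiv]

theorem hasFDerivAt_normSq3 (p : Fin 3 → ℝ) :
    HasFDerivAt normSq3
      (∑ i, (2 * p i) • ContinuousLinearMap.proj (R := ℝ) (φ := fun _ : Fin 3 => ℝ) i) p := by
  have h (i : Fin 3) := (hasFDerivAt_apply (𝕜 := ℝ) i p).pow 2
  refine (((h 0).add (h 1)).add (h 2)).congr_fderiv ?_
  ext v
  simp [Fin.sum_univ_three]

theorem angDeriv_radial {φ : ℝ → ℂ} (hφ : DifferentiableAt ℝ φ (normSq3 p)) :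
    angDeriv (fun q => φ (normSq3 q)) p = 0 := by
  have hD (i : Fin 3) :
      fderiv ℝ (φ ∘ normSq3) p (Pi.single i 1) = (2 * p i : ℝ) • deriv φ (normSq3 p) := by
    simp [(hφ.hasDerivAt.hasFDerivAt.comp p (hasFDerivAt_normSq3 p)).fderiv, Pi.single_apply]
  change angDeriv (φ ∘ normSq3) p = 0
  rw [angDeriv, hD, hD, real_smul, real_smul]
  push_cast
  ring

end angDeriv

theorem normSq3_nonneg (p : Fin 3 → ℝ) : 0 ≤ normSq3 p := by
  unfold normSq3
  positivity

@[fun_prop]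
theorem differentiable_normSq3 : Differentiable ℝ normSq3 :=
  fun p => (hasFDerivAt_normSq3 p).differentiableAt

section Letters

variable (α : Fin 4 → ℂ)

noncomputable def conformalFactor (p : Fin 3 → ℝ) : ℂ := ((2 / (normSq3 p + 1) : ℝ) : ℂ)

noncomputable def planarCross (p : Fin 3 → ℝ) : ℂ := α 0 * (p 1 : ℂ) - α 1 * (p 0 : ℂ)

noncomputable def planarDot (p : Fin 3 → ℝ) : ℂ := α 0 * (p 0 : ℂ) + α 1 * (p 1 : ℂ)

noncomputable def stereoNum (p : Fin 3 → ℝ) : ℂ :=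
  α 0 * (p 0 : ℂ) + α 1 * (p 1 : ℂ) + α 2 * (p 2 : ℂ) + α 3 * (((normSq3 p - 1) / 2 : ℝ) : ℂ)

@[fun_prop]
theorem differentiable_conformalFactor : Differentiable ℝ conformalFactor := fun p => by
  have : normSq3 p + 1 ≠ 0 := by linarith [normSq3_nonneg p]
  unfold conformalFactor
  fun_prop (disch := assumption)

@[fun_prop]
theorem differentiable_planarCross : Differentiable ℝ (planarCross α) := by
  unfold planarCross
  fun_prop

@[fun_prop]
theorem differentiable_planarDot : Differentiable ℝ (planarDot α) := by
  unfold planarDot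
  fun_prop

@[fun_prop]
theorem differentiable_stereoNum : Differentiable ℝ (stereoNum α) := by
  unfold stereoNum
  fun_prop

variable {α} {p : Fin 3 → ℝ}

theorem adotom_eq_mul : adotom α p = conformalFactor p * stereoNum α p := by
  have : normSq3 p + 1 ≠ 0 := by linarith [normSq3_nonneg p]
  simp only [adotom, stereoInv, Fin.sum_univ_four, conformalFactor, stereoNum,
    Matrix.cons_val_zero, Matrix.cons_val_one, Matrix.cons_val_two, Matrix.cons_val_three,
    Matrix.head_cons, Matrix.tail_cons]
  push_cast
  field_simp

theorem stereoNum_eq_mul : stereoNum α p = (((normSq3 p + 1) / 2 : ℝ) : ℂ) * adotom α p := by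
  have : normSq3 p + 1 ≠ 0 := by linarith [normSq3_nonneg p]
  rw [adotom_eq_mul, conformalFactor, ← mul_assoc, ← ofReal_mul]
  field_simp
  simp

@[fun_prop]
theorem differentiable_adotom (α : Fin 4 → ℂ) : Differentiable ℝ (adotom α) := by
  rw [funext fun p => adotom_eq_mul (α := α) (p := p)]
  fun_prop

theorem angDeriv_conformalFactor : angDeriv conformalFactor p = 0 := by
  have : normSq3 p + 1 ≠ 0 := by linarith [normSq3_nonneg p]
  exact angDeriv_radial (φ := fun s => ((2 / (s + 1) : ℝ) : ℂ)) (by fun_prop (disch := assumption))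

theorem angDeriv_planarCross : angDeriv (planarCross α) p = -planarDot α p := by
  unfold planarCross planarDot
  rw [angDeriv_sub (by fun_prop) (by fun_prop), angDeriv_const_mul _ (by fun_prop),
    angDeriv_const_mul _ (by fun_prop), angDeriv_ofReal_apply, angDeriv_ofReal_apply]
  simp only [Matrix.cons_val_zero, Matrix.cons_val_one]
  ring

theorem angDeriv_planarDot : angDeriv (planarDot α) p = planarCross α p := by
  unfold planarCross planarDot
  rw [angDeriv_add (by fun_prop) (by fun_prop), angDeriv_const_mul _ (by fun_prop),
    angDeriv_const_mul _ (by fun_prop), angDeriv_ofReal_apply, angDeriv_ofReal_apply]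
  simp only [Matrix.cons_val_zero, Matrix.cons_val_one]
  ring

theorem angDeriv_stereoNum : angDeriv (stereoNum α) p = planarCross α p := by
  have hrad : angDeriv (fun q => α 3 * (((normSq3 q - 1) / 2 : ℝ) : ℂ)) p = 0 :=
    angDeriv_radial (φ := fun s => α 3 * (((s - 1) / 2 : ℝ) : ℂ)) (by fun_prop)
  unfold stereoNum planarCross
  rw [angDeriv_add (by fun_prop) (by fun_prop), angDeriv_add (by fun_prop) (by fun_prop),
    angDeriv_add (by fun_prop) (by fun_prop), angDeriv_const_mul _ (by fun_prop),
    angDeriv_const_mul _ (by fun_prop), angDeriv_const_mul _ (by fun_prop),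
    angDeriv_ofReal_apply, angDeriv_ofReal_apply, angDeriv_ofReal_apply, hrad]
  simp only [Matrix.cons_val_zero, Matrix.cons_val_one, Matrix.cons_val_two, Matrix.tail_cons,
    Matrix.head_cons]
  ring

theorem angDeriv_adotom : angDeriv (adotom α) p = conformalFactor p * planarCross α p := by
  simp only [funext fun q => adotom_eq_mul (α := α) (p := q)]
  rw [angDeriv_mul (by fun_prop) (by fun_prop), angDeriv_conformalFactor, angDeriv_stereoNum]
  ring

end Letters

section WordSum

variable {A L X : Type*}

/-- Coefficients and words do not depend on the parameter `a`: this is what makes the final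
coefficients independent of `α`. -/
def IsWordSum (y : A → L → X → ℂ) (t : ℕ) (S : Set (Fin t → L)) (r : ℝ) (f : A → X → ℂ) :
    Prop :=
  ∃ (ι : Type) (_ : Fintype ι) (c : ι → ℂ) (w : ι → Fin t → L),
    (∀ i, w i ∈ S) ∧ ∑ i, ‖c i‖ ≤ r ∧ ∀ a x, f a x = ∑ i, c i * ∏ k, y a (w i k) x

theorem isWordSum_const_mul_pow {y : A → L → X → ℂ} {t : ℕ} {S : Set (Fin t → L)} (c : ℂ)
    {l : L} (hl : (fun _ => l) ∈ S) : IsWordSum y t S ‖c‖ (fun a x => c * y a l x ^ t) :=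
  ⟨Unit, inferInstance, fun _ => c, fun _ _ => l, fun _ => hl, by simp, by simp⟩

namespace IsWordSum

variable {y : A → L → X → ℂ} {t : ℕ} {S S' : Set (Fin t → L)} {r s : ℝ} {f g : A → X → ℂ}

theorem zero : IsWordSum y t S 0 (fun _ _ => 0) :=
  ⟨Empty, inferInstance, Empty.elim, Empty.elim, fun i => i.elim, by simp, by simp⟩

theorem nonneg (hf : IsWordSum y t S r f) : 0 ≤ r := by
  obtain ⟨ι, _, c, w, -, hc, -⟩ := hf
  exact (sum_nonneg fun i _ => norm_nonneg (c i)).trans hc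

theorem mono (hf : IsWordSum y t S r f) (hS : S ⊆ S') (hr : r ≤ s) : IsWordSum y t S' s f := by
  obtain ⟨ι, _, c, w, hw, hc, hf⟩ := hf
  exact ⟨ι, inferInstance, c, w, fun i => hS (hw i), hc.trans hr, hf⟩

theorem congr (hf : IsWordSum y t S r f) (h : ∀ a x, f a x = g a x) : IsWordSum y t S r g := by
  obtain ⟨ι, _, c, w, hw, hc, hf⟩ := hf
  exact ⟨ι, inferInstance, c, w, hw, hc, fun a x => (h a x).symm.trans (hf a x)⟩

theorem add (hf : IsWordSum y t S r f) (hg : IsWordSum y t S s g) :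
    IsWordSum y t S (r + s) (fun a x => f a x + g a x) := by
  obtain ⟨ι, _, c, w, hw, hc, hf⟩ := hf
  obtain ⟨κ, _, d, v, hv, hd, hg⟩ := hg
  refine ⟨ι ⊕ κ, inferInstance, Sum.elim c d, Sum.elim w v, ?_, ?_, ?_⟩
  · rintro (i | i) <;> simp [hw, hv]
  · simpa [Fintype.sum_sum_type] using add_le_add hc hd
  · intro a x
    simp [Fintype.sum_sum_type, hf, hg]

theorem const_mul (c₀ : ℂ) (hf : IsWordSum y t S r f) :
    IsWordSum y t S (‖c₀‖ * r) (fun a x => c₀ * f a x) := by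
  obtain ⟨ι, _, c, w, hw, hc, hf⟩ := hf
  refine ⟨ι, inferInstance, fun i => c₀ * c i, w, hw, ?_, ?_⟩
  · simpa only [norm_mul, ← mul_sum] using mul_le_mul_of_nonneg_left hc (norm_nonneg c₀)
  · intro a x
    simp [hf, mul_sum, mul_assoc]

theorem letter_mul (l : L) {S' : Set (Fin (t + 1) → L)} (hf : IsWordSum y t S r f)
    (hS : ∀ w ∈ S, (Fin.cons l w : Fin (t + 1) → L) ∈ S') :
    IsWordSum y (t + 1) S' r (fun a x => y a l x * f a x) := by
  obtain ⟨ι, _, c, w, hw, hc, hf⟩ := hf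
  refine ⟨ι, inferInstance, c, fun i => Fin.cons l (w i), fun i => hS _ (hw i), hc, ?_⟩
  intro a x
  simp only [hf, mul_sum, Fin.prod_univ_succ, Fin.cons_zero, Fin.cons_succ]
  exact sum_congr rfl fun i _ => by ring

theorem differentiable [NormedAddCommGroup X] [NormedSpace ℝ X]
    (hy : ∀ a l, Differentiable ℝ (y a l)) (hf : IsWordSum y t S r f) (a : A) :
    Differentiable ℝ (f a) := by
  obtain ⟨ι, _, c, w, -, -, hf⟩ := hf
  rw [funext (hf a)]
  fun_prop

theorem angDeriv [DecidableEq L] {y : A → L → (Fin 3 → ℝ) → ℂ} {f : A → (Fin 3 → ℝ) → ℂ}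
    {σ : L → ℂ} {τ : L → L} (hy : ∀ a l, Differentiable ℝ (y a l))
    (hyd : ∀ a l p, _root_.angDeriv (y a l) p = σ l * y a (τ l) p) (hσ : ∀ l, ‖σ l‖ ≤ 1)
    (hf : IsWordSum y t S r f) (hS : ∀ w ∈ S, ∀ k, Function.update w k (τ (w k)) ∈ S') :
    IsWordSum y t S' (t * r) (fun a => _root_.angDeriv (f a)) := by
  obtain ⟨ι, _, c, w, hw, hc, hf⟩ := hf
  refine ⟨ι × Fin t, inferInstance, fun ik => c ik.1 * σ (w ik.1 ik.2),
    fun ik => Function.update (w ik.1) ik.2 (τ (w ik.1 ik.2)), fun ik => hS _ (hw _) _, ?_, ?_⟩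
  · calc ∑ ik : ι × Fin t, ‖c ik.1 * σ (w ik.1 ik.2)‖
        ≤ ∑ ik : ι × Fin t, ‖c ik.1‖ := sum_le_sum fun ik _ => by
          rw [norm_mul]
          exact mul_le_of_le_one_right (norm_nonneg _) (hσ _)
      _ = t * ∑ i, ‖c i‖ := by simp [Fintype.sum_prod_type, mul_sum]
      _ ≤ t * r := mul_le_mul_of_nonneg_left hc t.cast_nonneg
  · intro a p
    dsimp only
    rw [funext (hf a), angDeriv_sum _ fun i _ => by fun_prop, Fintype.sum_prod_type]
    refine sum_congr rfl fun i _ => ?_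
    rw [angDeriv_const_mul _ (by fun_prop), angDeriv_prod fun k => (hy _ _).differentiableAt,
      mul_sum]
    refine sum_congr rfl fun k _ => ?_
    have hupd : ∏ j, y a (Function.update (w i) k (τ (w i k)) j) p
        = y a (τ (w i k)) p * ∏ j ∈ univ.erase k, y a (w i j) p := by
      simp_rw [Function.apply_update (fun _ l => y a l p)]
      rw [prod_update_of_mem (mem_univ k), sdiff_singleton_eq_erase]
    rw [hyd, hupd]
    ring

end IsWordSum

theorem prod_comp_fin_three {M : Type*} [CommMonoid M] {m : ℕ} (v : Fin 3 → M)
    (w : Fin m → Fin 3) :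
    ∏ k, v (w k) = v 0 ^ #{k | w k = 0} * v 1 ^ (m - #{k | w k = 2} - #{k | w k = 0}) *
      v 2 ^ #{k | w k = 2} := by
  have hcard : #{k | w k = 0} + #{k | w k = 1} + #{k | w k = 2} = m := by
    simpa [Fin.sum_univ_three] using
      (card_eq_sum_card_fiberwise (f := w) (s := univ) (t := univ) (by simp)).symm
  have hfib (l : Fin 3) : ∏ k with w k = l, v (w k) = v l ^ #{k | w k = l} := by
    rw [prod_congr rfl fun k hk => by rw [(mem_filter.1 hk).2], prod_const]
  rw [← prod_fiberwise univ w, Fin.prod_univ_three, hfib, hfib, hfib,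
    show m - #{k | w k = 2} - #{k | w k = 0} = #{k | w k = 1} by omega]

theorem IsWordSum.exists_eq_sum_monomial {y : A → Fin 3 → X → ℂ} {m : ℕ} {r : ℝ} {f : A → X → ℂ}
    (hf : IsWordSum y m {w | ∃ k, w k ≠ 2} r f) :
    ∃ C : ℕ → ℕ → ℂ, (∀ ℓ j, ‖C ℓ j‖ ≤ r) ∧ ∀ a x, f a x =
      ∑ ℓ ∈ range m, ∑ j ∈ range (m - ℓ + 1),
        C ℓ j * y a 0 x ^ j * y a 1 x ^ (m - ℓ - j) * y a 2 x ^ ℓ := by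
  obtain ⟨ι, _, c, w, hw, hc, hf⟩ := hf
  let deg (i : ι) (l : Fin 3) : ℕ := #{k | w i k = l}
  have hdeg2 (i : ι) : deg i 2 < m := by
    obtain ⟨k, hk⟩ := hw i
    simpa using card_lt_card (filter_ssubset.2 ⟨k, mem_univ k, hk⟩)
  have hdeg0 (i : ι) : deg i 0 ≤ m - deg i 2 := by
    have := card_eq_sum_card_fiberwise (f := w i) (s := univ) (t := univ) (by simp)
    simp only [card_univ, Fintype.card_fin, Fin.sum_univ_three] at this
    simp only [deg]
    omega
  refine ⟨fun ℓ j => ∑ i with deg i 2 = ℓ ∧ deg i 0 = j, c i, fun ℓ j => ?_, fun a x => ?_⟩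
  · exact (norm_sum_le _ _).trans
      ((sum_le_sum_of_subset_of_nonneg (filter_subset _ _) fun i _ _ => norm_nonneg _).trans hc)
  · rw [hf, ← sum_fiberwise_of_maps_to (g := fun i => deg i 2) (t := range m)
      fun i _ => mem_range.2 (hdeg2 i)]
    refine sum_congr rfl fun ℓ _ => ?_
    rw [← sum_fiberwise_of_maps_to (g := fun i => deg i 0) (t := range (m - ℓ + 1))
      fun i hi => mem_range.2 (by have := hdeg0 i; rw [(mem_filter.1 hi).2] at this; omega)]
    refine sum_congr rfl fun j _ => ?_
    rw [filter_filter, sum_mul, sum_mul, sum_mul]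
    refine sum_congr rfl fun i hi => ?_
    obtain ⟨h2, h0⟩ := (mem_filter.1 hi).2
    rw [prod_comp_fin_three (y a · x), ← h2, ← h0]
    ring

end WordSum

section Expansion

noncomputable def letter (α : Fin 4 → ℂ) : Fin 3 → (Fin 3 → ℝ) → ℂ :=
  ![planarCross α, planarDot α, stereoNum α]

theorem differentiable_letter (α : Fin 4 → ℂ) (l : Fin 3) : Differentiable ℝ (letter α l) := by
  fin_cases l
  exacts [differentiable_planarCross α, differentiable_planarDot α, differentiable_stereoNum α]

theorem angDeriv_letter (α : Fin 4 → ℂ) (l : Fin 3) (p : Fin 3 → ℝ) :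
    angDeriv (letter α l) p = ![-1, 1, 1] l * letter α (![1, 0, 0] l) p := by
  fin_cases l <;> simp [letter, angDeriv_planarCross, angDeriv_planarDot, angDeriv_stereoNum]

noncomputable def angularPoly (N : ℕ) : ℕ → (Fin 4 → ℂ) → (Fin 3 → ℝ) → ℂ
  | 0 => fun _ _ => 1
  | t + 1 => fun α p => (((N - t : ℕ) : ℂ) * planarCross α p * angularPoly N t α p
      + stereoNum α p * angDeriv (angularPoly N t α) p) / (N + 1)

theorem isWordSum_angularPoly_succ {N t : ℕ} {a r : ℝ} {R : (Fin 4 → ℂ) → (Fin 3 → ℝ) → ℂ}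
    (ha : 0 ≤ a) (hR : IsWordSum letter t {w | ∃ k, w k ≠ 2} r R)
    (hP : ∀ α p, angularPoly N t α p = a * planarCross α p ^ t + R α p) :
    IsWordSum letter (t + 1) {w | ∃ k, w k ≠ 2} (((N - t : ℕ) * r + t * (a + r)) / (N + 1))
      (fun α p => angularPoly N (t + 1) α p
        - (((N - t : ℕ) * a / (N + 1) : ℝ) : ℂ) * planarCross α p ^ (t + 1)) := by
  have hPsum : IsWordSum letter t Set.univ (a + r) (angularPoly N t) := by
    have h := (isWordSum_const_mul_pow (y := letter) (a : ℂ) (l := 0) (Set.mem_univ _)).add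
      (hR.mono (Set.subset_univ _) le_rfl)
    rw [show angularPoly N t = fun α p => a * planarCross α p ^ t + R α p from funext₂ hP]
    simpa [abs_of_nonneg ha, letter] using h
  have hD := hPsum.angDeriv differentiable_letter angDeriv_letter
    (fun l => by fin_cases l <;> simp) (S' := {w | ∃ k, w k ≠ 2})
    fun w _ k => ⟨k, by
      rw [Function.update_self]
      generalize w k = l
      fin_cases l <;> decide⟩
  have hV := hD.letter_mul 2 (S' := {w | ∃ k, w k ≠ 2}) fun w ⟨k, hk⟩ => ⟨k.succ, by simpa using hk⟩
  have hB := hR.letter_mul 0 (S' := {w | ∃ k, w k ≠ 2}) fun w _ => ⟨0, by simp⟩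
  have h := (hB.const_mul (((N - t : ℕ) : ℂ) / (N + 1))).add (hV.const_mul (1 / (N + 1)))
  have hN : ‖(N : ℂ) + 1‖ = N + 1 := by exact_mod_cast Complex.norm_natCast (N + 1)
  refine (h.mono le_rfl (le_of_eq ?_)).congr fun α p => ?_
  · simp only [Complex.norm_div, RCLike.norm_natCast, hN, one_div, norm_inv]
    ring
  · simp only [letter, Matrix.cons_val_zero, Matrix.cons_val_two, Matrix.tail_cons,
      Matrix.head_cons, angularPoly, hP]
    push_cast
    ring

theorem exists_angularPoly_eq_pow_add {N t : ℕ} (ht : t ≤ N) :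
    ∃ a r : ℝ, ∃ R : (Fin 4 → ℂ) → (Fin 3 → ℝ) → ℂ,
      0 ≤ a ∧ a + r ≤ 1 ∧ 1 - a + r ≤ t ^ 2 / (N + 1) ∧
      IsWordSum letter t {w | ∃ k, w k ≠ 2} r R ∧
      ∀ α p, angularPoly N t α p = a * planarCross α p ^ t + R α p := by
  induction t with
  | zero => exact ⟨1, 0, fun _ _ => 0, by simp, by simp, by simp, .zero, by simp [angularPoly]⟩
  | succ t ih =>
    obtain ⟨a, r, R, ha, har, herr, hR, hP⟩ := ih (by omega)
    have hr := hR.nonneg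
    have hN : (0 : ℝ) < N + 1 := by positivity
    have htN : ((N - t : ℕ) : ℝ) = N - t := by rw [Nat.cast_sub (by omega)]
    refine ⟨(N - t : ℕ) * a / (N + 1), ((N - t : ℕ) * r + t * (a + r)) / (N + 1), _,
      by positivity, ?_, ?_, isWordSum_angularPoly_succ ha hR hP, fun α p => by ring⟩
    · rw [htN, ← add_div, div_le_one hN]
      nlinarith
    · rw [le_div_iff₀ hN] at herr
      have ha1 : (2 * t + 1 : ℝ) * a ≤ 2 * t + 1 :=
        mul_le_of_le_one_right (by positivity) (by linarith)
      calc 1 - (N - t : ℕ) * a / (N + 1) + ((N - t : ℕ) * r + t * (a + r)) / (N + 1)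
          = ((1 - a + r) * (N + 1) + (2 * t + 1) * a - r) / (N + 1) := by
            rw [htN]
            field_simp
            ring
        _ ≤ (t + 1 : ℕ) ^ 2 / (N + 1) := by
            gcongr
            push_cast
            nlinarith

theorem differentiable_angularPoly {N t : ℕ} (ht : t ≤ N) (α : Fin 4 → ℂ) :
    Differentiable ℝ (angularPoly N t α) := by
  obtain ⟨a, r, R, -, -, -, hR, hP⟩ := exists_angularPoly_eq_pow_add ht
  have := hR.differentiable differentiable_letter α
  rw [funext (hP α)]
  fun_prop

theorem angDeriv_conformalFactor_pow_mul {α : Fin 4 → ℂ} {P : (Fin 3 → ℝ) → ℂ}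
    {p : Fin 3 → ℝ} (hP : DifferentiableAt ℝ P p) (k : ℕ) {n : ℕ} (hn : 0 < n) :
    angDeriv (fun q => conformalFactor q ^ k * adotom α q ^ n * P q) p =
      conformalFactor p ^ (k + 1) * adotom α p ^ (n - 1) *
        (n * planarCross α p * P p + stereoNum α p * angDeriv P p) := by
  rw [angDeriv_mul (by fun_prop) hP, angDeriv_mul (by fun_prop) (by fun_prop),
    angDeriv_pow (by fun_prop), angDeriv_pow (by fun_prop), angDeriv_conformalFactor,
    angDeriv_adotom]
  obtain ⟨n, rfl⟩ := Nat.exists_eq_add_of_lt hn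
  rw [Nat.add_sub_cancel, pow_succ _ (0 + n), adotom_eq_mul]
  push_cast
  ring

theorem iterate_L3tilde_eq (α : Fin 4 → ℂ) {N t : ℕ} (ht : t ≤ N) :
    (fun g : (Fin 3 → ℝ) → ℂ => fun q => ((N : ℂ) + 1)⁻¹ * L3tilde g q)^[t]
        (fun q => ((2 / (normSq3 q + 1) : ℝ) : ℂ) ^ 2 * adotom α q ^ N) =
      fun p => (-I) ^ t * (conformalFactor p ^ (t + 2) * adotom α p ^ (N - t) *
        angularPoly N t α p) := by
  induction t with
  | zero =>
    funext p
    simp [angularPoly, conformalFactor]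
  | succ t ih =>
    rw [Function.iterate_succ_apply', ih (by omega)]
    funext p
    have hP := differentiable_angularPoly (N := N) (t := t) (by omega) α p
    simp only [L3tilde_eq_angDeriv]
    rw [angDeriv_const_mul _ (by fun_prop), angDeriv_conformalFactor_pow_mul hP _ (by omega),
      show N - t - 1 = N - (t + 1) by omega, angularPoly]
    field_simp
    ring

theorem exists_angularPoly_eq_sum {N m : ℕ} (hm : 1 ≤ m) (hmN : m ≤ N) :
    ∃ C : ℕ → ℕ → ℂ, (∀ ℓ j, ‖C ℓ j‖ ≤ m ^ 2 / (N + 1)) ∧ ∀ α p,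
      angularPoly N m α p = planarCross α p ^ m + ∑ ℓ ∈ range m, ∑ j ∈ range (m - ℓ + 1),
        C ℓ j * planarCross α p ^ j * planarDot α p ^ (m - ℓ - j) * stereoNum α p ^ ℓ := by
  obtain ⟨a, r, R, ha, har, herr, hR, hP⟩ := exists_angularPoly_eq_pow_add hmN
  obtain ⟨C, hC, hCR⟩ := hR.exists_eq_sum_monomial
  refine ⟨fun ℓ j => C ℓ j + if ℓ = 0 ∧ j = m then (a - 1 : ℂ) else 0, fun ℓ j => ?_,
    fun α p => ?_⟩
  · have ha1 : a ≤ 1 := by linarith [hR.nonneg]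
    have hite : ‖if ℓ = 0 ∧ j = m then (a - 1 : ℂ) else 0‖ ≤ 1 - a := by
      split_ifs
      · rw [← ofReal_one, ← ofReal_sub, norm_real, Real.norm_of_nonpos (by linarith), neg_sub]
      · simpa using ha1
    exact (norm_add_le _ _).trans (by linarith [hC ℓ j])
  · rw [hP, hCR]
    simp only [letter, Matrix.cons_val_zero, Matrix.cons_val_one, Matrix.cons_val_two,
      Matrix.tail_cons, Matrix.head_cons, add_mul, sum_add_distrib, ite_and, ite_mul, zero_mul,
      sum_ite_irrel, sum_ite_eq', mem_range, sum_const_zero, show 0 < m by omega, if_true,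
      Nat.lt_succ_self, Nat.sub_self, Nat.sub_zero, pow_zero, mul_one]
    ring

end Expansion

/-- the `m`-fold iterate of `(N+1)⁻¹L̃₃` on
`F_N(p) = (2/(|p|²+1))²(α·ω(p))^N` has the stated form, with coefficients
`C_{N,m,ℓ,j}` independent of `α` and of size `O(N⁻¹)` uniformly. -/
theorem stmt11 (m : ℕ) (hm : 1 ≤ m) :
    ∃ K > 0, ∀ N : ℕ, m ≤ N → ∃ C : ℕ → ℕ → ℂ,
      (∀ ℓ j : ℕ, ℓ < m → j ≤ m - ℓ → ‖C ℓ j‖ ≤ K / N) ∧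
      ∀ α : Fin 4 → ℂ, memA α → ∀ p : Fin 3 → ℝ,
        ((fun g : (Fin 3 → ℝ) → ℂ => fun q => ((N : ℂ) + 1)⁻¹ * L3tilde g q)^[m]
            (fun q => ((2 / (normSq3 q + 1) : ℝ) : ℂ) ^ 2 * adotom α q ^ N)) p =
          (-Complex.I) ^ m *
            ((α 0 * (p 1 : ℂ) - α 1 * (p 0 : ℂ)) ^ m +
              ∑ ℓ ∈ Finset.range m, ∑ j ∈ Finset.range (m - ℓ + 1),
                C ℓ j * (α 0 * (p 1 : ℂ) - α 1 * (p 0 : ℂ)) ^ j *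
                  (α 0 * (p 0 : ℂ) + α 1 * (p 1 : ℂ)) ^ (m - ℓ - j) *
                  (((normSq3 p + 1) / 2 : ℝ) : ℂ) ^ ℓ * adotom α p ^ ℓ) *
            ((2 / (normSq3 p + 1) : ℝ) : ℂ) ^ (m + 2) * adotom α p ^ (N - m) := by
  have hm0 : (0 : ℝ) < m := by exact_mod_cast hm
  refine ⟨m ^ 2, by positivity, fun N hmN => ?_⟩
  obtain ⟨C, hC, hexp⟩ := exists_angularPoly_eq_sum hm hmN
  have hN : (0 : ℝ) < N := hm0.trans_le (by exact_mod_cast hmN)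
  refine ⟨C, fun ℓ j _ _ => (hC ℓ j).trans (by gcongr; linarith), fun α _ p => ?_⟩
  rw [iterate_L3tilde_eq α hmN]
  dsimp only
  rw [hexp]
  simp only [stereoNum_eq_mul, mul_pow, planarCross, planarDot, conformalFactor, ← mul_assoc]
  ring
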